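/- Let Ω ⊆ ℝ³ be open, p, q : Ω → ℂ with p ∈ C²(Ω), p nonvanishing, and let u₀ be a nonvanishing C² solution of div(p grad u₀) + q u₀ = 0 in Ω. Set f = p^{1/2}u₀ (for a fixed continuous branch of the square root). Then for every scalar φ ∈ C²(Ω): div(p grad φ) + qφ = -p^{1/2}(D + M^{Df/f})(D - M^{Df/f})(p^{1/2}φ). -/

import Mathlib

noncomputable section

/-- ℝ³ -/
abbrev V3 := Fin 3 → ℝ
/-- Complex quaternions ℍ(ℂ) -/
abbrev HC := Quaternion ℂ

/-- partial derivative ∂ₖ of a function on ℝ³ -/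
noncomputable def pd {E : Type*} [NormedAddCommGroup E] [NormedSpace ℝ E]
    (k : Fin 3) (g : V3 → E) (x : V3) : E :=
  fderiv ℝ g x (Pi.single k 1)

noncomputable def grad {E : Type*} [NormedAddCommGroup E] [NormedSpace ℝ E]
    (g : V3 → E) (x : V3) : Fin 3 → E := fun k => pd k g x

noncomputable def dvg {E : Type*} [NormedAddCommGroup E] [NormedSpace ℝ E]
    (F : V3 → Fin 3 → E) (x : V3) : E :=
  pd 0 (fun y => F y 0) x + pd 1 (fun y => F y 1) x + pd 2 (fun y => F y 2) x

noncomputable def rot {E : Type*} [NormedAddCommGroup E] [NormedSpace ℝ E]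
    (F : V3 → Fin 3 → E) (x : V3) : Fin 3 → E :=
  ![pd 1 (fun y => F y 2) x - pd 2 (fun y => F y 1) x,
    pd 2 (fun y => F y 0) x - pd 0 (fun y => F y 2) x,
    pd 0 (fun y => F y 1) x - pd 1 (fun y => F y 0) x]

/-- scalar Laplacian -/
noncomputable def lapS {E : Type*} [NormedAddCommGroup E] [NormedSpace ℝ E]
    (g : V3 → E) (x : V3) : E :=
  pd 0 (pd 0 g) x + pd 1 (pd 1 g) x + pd 2 (pd 2 g) x

/-- purely vectorial quaternion from a ℂ³ vector -/
def vecq (v : Fin 3 → ℂ) : HC := ⟨0, v 0, v 1, v 2⟩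
/-- scalar quaternion -/
def scq (a : ℂ) : HC := ⟨a, 0, 0, 0⟩

def e1 : HC := ⟨0,1,0,0⟩
def e2 : HC := ⟨0,0,1,0⟩
def e3 : HC := ⟨0,0,0,1⟩

/-- vector part of a quaternion, as a ℂ³ vector -/
def vecPart (a : HC) : Fin 3 → ℂ := ![a.imI, a.imJ, a.imK]

/-- quaternionic conjugation C_H -/
def qconj (a : HC) : HC := ⟨a.re, -a.imI, -a.imJ, -a.imK⟩

/-- componentwise partial derivative of an ℍ(ℂ)-valued function -/
noncomputable def qpd (k : Fin 3) (F : V3 → HC) (x : V3) : HC :=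
  ⟨pd k (fun y => (F y).re) x, pd k (fun y => (F y).imI) x,
   pd k (fun y => (F y).imJ) x, pd k (fun y => (F y).imK) x⟩

/-- The Moisil–Teodorescu (Dirac) operator D = Σₖ iₖ∂ₖ -/
noncomputable def Dq (F : V3 → HC) (x : V3) : HC :=
  e1 * qpd 0 F x + e2 * qpd 1 F x + e3 * qpd 2 F x

/-- componentwise Laplacian of an ℍ(ℂ)-valued function -/
noncomputable def qlap (F : V3 → HC) (x : V3) : HC :=
  qpd 0 (qpd 0 F) x + qpd 1 (qpd 1 F) x + qpd 2 (qpd 2 F) x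

/-- ContDiffOn for ℍ(ℂ)-valued functions, componentwise -/
def QContDiffOn (n : ℕ∞) (F : V3 → HC) (s : Set V3) : Prop :=
  ContDiffOn ℝ n (fun x => (F x).re) s ∧ ContDiffOn ℝ n (fun x => (F x).imI) s ∧
  ContDiffOn ℝ n (fun x => (F x).imJ) s ∧ ContDiffOn ℝ n (fun x => (F x).imK) s

/-- euclidean norm on ℝ³ -/
noncomputable def nrm (x : V3) : ℝ := Real.sqrt (x 0 ^ 2 + x 1 ^ 2 + x 2 ^ 2)

/-- fundamental solution of the Helmholtz operator -/
noncomputable def theta (α : ℂ) (x : V3) : ℂ :=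
  -Complex.exp (Complex.I * α * (nrm x : ℂ)) / (4 * Real.pi * (nrm x : ℂ))

/-- x as a purely vectorial quaternion -/
def xq (x : V3) : HC := vecq fun k => ((x k : ℝ) : ℂ)

/-!
Write `s = p^{1/2}`, `f = s u₀`, `g = s φ` and `w = Df/f`. For the quaternionic side, `D(vecq V)`
has scalar part `-div V` and vector part `rot V`, and `vecq a * vecq b = -(a·b) + a × b`. Since
`w` is a logarithmic gradient, `rot w = 0` and `div w = Δf/f - w·w`; expanding
`(D + M^w)(grad g - g w)` the cross products cancel and the result is the scalar `g Δf/f - Δg`.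
For the scalar side, `div(s² grad φ) = s Δ(sφ) - sφ Δs`; applied to `u₀` the equation gives
`q u₀ = s u₀ Δs - s Δf`, and the terms `sφ Δs` cancel, leaving `-s (g Δf/f - Δg)`.
-/

open Matrix Filter Topology

section VectorCalculus

variable {E : Type*} [NormedAddCommGroup E] [NormedSpace ℝ E]
  {𝕜 : Type*} [NormedField 𝕜] [NormedAlgebra ℝ 𝕜] {x : V3}

theorem Filter.EventuallyEq.pd_eq {a b : V3 → E} (h : a =ᶠ[𝓝 x] b) (k : Fin 3) :
    pd k a x = pd k b x := by
  simp only [pd, h.fderiv_eq]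

theorem Filter.EventuallyEq.dvg_eq {F G : V3 → Fin 3 → E} (h : F =ᶠ[𝓝 x] G) :
    dvg F x = dvg G x := by
  have hk (k : Fin 3) : (fun y => F y k) =ᶠ[𝓝 x] fun y => G y k :=
    h.mono fun y hy => congrFun hy k
  simp only [dvg, (hk _).pd_eq]

theorem pd_add {a b : V3 → E} (ha : DifferentiableAt ℝ a x) (hb : DifferentiableAt ℝ b x)
    (k : Fin 3) : pd k (fun y => a y + b y) x = pd k a x + pd k b x := by
  simp [pd, fderiv_fun_add ha hb]

theorem pd_sub {a b : V3 → E} (ha : DifferentiableAt ℝ a x) (hb : DifferentiableAt ℝ b x)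
    (k : Fin 3) : pd k (fun y => a y - b y) x = pd k a x - pd k b x := by
  simp [pd, fderiv_fun_sub ha hb]

theorem pd_mul {a b : V3 → 𝕜} (ha : DifferentiableAt ℝ a x) (hb : DifferentiableAt ℝ b x)
    (k : Fin 3) : pd k (fun y => a y * b y) x = pd k a x * b x + a x * pd k b x := by
  simp [pd, fderiv_fun_mul ha hb, add_comm, mul_comm]

theorem pd_div {a b : V3 → 𝕜} (ha : DifferentiableAt ℝ a x) (hb : DifferentiableAt ℝ b x)
    (hb0 : b x ≠ 0) (k : Fin 3) :
    pd k (fun y => a y / b y) x = (pd k a x * b x - a x * pd k b x) / b x ^ 2 := by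
  have hinv : pd k (fun y => (b y)⁻¹) x = -pd k b x / b x ^ 2 := by
    have h : HasFDerivAt (fun y => (b y)⁻¹)
        ((-ContinuousLinearMap.mulLeftRight ℝ 𝕜 (b x)⁻¹ (b x)⁻¹).comp (fderiv ℝ b x)) x :=
      (hasFDerivAt_inv' hb0).comp x hb.hasFDerivAt
    simp only [pd, h.fderiv, ContinuousLinearMap.neg_comp, _root_.neg_apply,
      ContinuousLinearMap.comp_apply, ContinuousLinearMap.mulLeftRight_apply]
    field_simp
  simp only [div_eq_mul_inv]
  rw [pd_mul ha (hb.fun_inv hb0), hinv]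
  field_simp
  ring

theorem ContDiffAt.differentiableAt_pd {g : V3 → E} (hg : ContDiffAt ℝ 2 g x) (k : Fin 3) :
    DifferentiableAt ℝ (pd k g) x :=
  ((hg.fderiv_right (m := 1) (by norm_num)).differentiableAt one_ne_zero).clm_apply
    (differentiableAt_const _)

theorem ContDiffAt.differentiableAt_grad {g : V3 → E} (hg : ContDiffAt ℝ 2 g x) :
    DifferentiableAt ℝ (grad g) x :=
  differentiableAt_pi.2 hg.differentiableAt_pd

theorem ContDiffAt.pd_pd_comm {g : V3 → E} (hg : ContDiffAt ℝ 2 g x) (j k : Fin 3) :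
    pd j (pd k g) x = pd k (pd j g) x := by
  have hd : DifferentiableAt ℝ (fderiv ℝ g) x :=
    (hg.fderiv_right (m := 1) (by norm_num)).differentiableAt one_ne_zero
  have hflip (v : V3) :
      fderiv ℝ (fun y => fderiv ℝ g y v) x = (fderiv ℝ (fderiv ℝ g) x).flip v := by
    rw [fderiv_clm_apply hd (differentiableAt_const v)]
    simp
  change fderiv ℝ (fun y => fderiv ℝ g y _) x _ = fderiv ℝ (fun y => fderiv ℝ g y _) x _
  rw [hflip, hflip]
  exact hg.isSymmSndFDerivAt (by simp) _ _

theorem grad_mul {a b : V3 → 𝕜} (ha : DifferentiableAt ℝ a x) (hb : DifferentiableAt ℝ b x) :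
    grad (fun y => a y * b y) x = a x • grad b x + b x • grad a x := by
  funext k
  simp only [grad, pd_mul ha hb, Pi.add_apply, Pi.smul_apply, smul_eq_mul]
  ring

theorem dvg_grad (g : V3 → E) : dvg (grad g) x = lapS g x := rfl

theorem dvg_add {F G : V3 → Fin 3 → E} (hF : DifferentiableAt ℝ F x)
    (hG : DifferentiableAt ℝ G x) : dvg (fun y => F y + G y) x = dvg F x + dvg G x := by
  simp only [dvg, Pi.add_apply, pd_add (differentiableAt_pi.1 hF _) (differentiableAt_pi.1 hG _)]
  abel

theorem dvg_sub {F G : V3 → Fin 3 → E} (hF : DifferentiableAt ℝ F x)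
    (hG : DifferentiableAt ℝ G x) : dvg (fun y => F y - G y) x = dvg F x - dvg G x := by
  simp only [dvg, Pi.sub_apply, pd_sub (differentiableAt_pi.1 hF _) (differentiableAt_pi.1 hG _)]
  abel

theorem rot_sub {F G : V3 → Fin 3 → E} (hF : DifferentiableAt ℝ F x)
    (hG : DifferentiableAt ℝ G x) : rot (fun y => F y - G y) x = rot F x - rot G x := by
  simp only [rot, Pi.sub_apply, pd_sub (differentiableAt_pi.1 hF _) (differentiableAt_pi.1 hG _),
    cons_sub_cons, empty_sub_empty]
  exact vec3_eq (by abel) (by abel) (by abel)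

theorem dvg_smul {a : V3 → 𝕜} {W : V3 → Fin 3 → 𝕜} (ha : DifferentiableAt ℝ a x)
    (hW : DifferentiableAt ℝ W x) :
    dvg (fun y => a y • W y) x = grad a x ⬝ᵥ W x + a x * dvg W x := by
  simp only [dvg, Pi.smul_apply, smul_eq_mul, pd_mul ha (differentiableAt_pi.1 hW _), dotProduct,
    Fin.sum_univ_three, grad]
  ring

theorem rot_smul {a : V3 → 𝕜} {W : V3 → Fin 3 → 𝕜} (ha : DifferentiableAt ℝ a x)
    (hW : DifferentiableAt ℝ W x) :
    rot (fun y => a y • W y) x = grad a x ⨯₃ W x + a x • rot W x := by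
  simp only [rot, Pi.smul_apply, smul_eq_mul, pd_mul ha (differentiableAt_pi.1 hW _), cross_apply,
    grad, smul_vec3, vec3_add]
  exact vec3_eq (by ring) (by ring) (by ring)

theorem rot_grad {g : V3 → E} (hg : ContDiffAt ℝ 2 g x) : rot (grad g) x = 0 := by
  simp [rot, grad, hg.pd_pd_comm 1 2, hg.pd_pd_comm 2 0, hg.pd_pd_comm 0 1]

theorem lapS_mul {a b : V3 → 𝕜} (ha : ContDiffAt ℝ 2 a x) (hb : ContDiffAt ℝ 2 b x) :
    lapS (fun y => a y * b y) x = lapS a x * b x + 2 * (grad a x ⬝ᵥ grad b x) + a x * lapS b x := by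
  have hgrad : grad (fun y => a y * b y) =ᶠ[𝓝 x] fun y => a y • grad b y + b y • grad a y := by
    filter_upwards [ha.eventually (by simp), hb.eventually (by simp)] with y hay hby
    exact grad_mul (hay.differentiableAt two_ne_zero) (hby.differentiableAt two_ne_zero)
  have ha1 := ha.differentiableAt two_ne_zero
  have hb1 := hb.differentiableAt two_ne_zero
  rw [← dvg_grad, hgrad.dvg_eq, dvg_add (ha1.fun_smul hb.differentiableAt_grad)
    (hb1.fun_smul ha.differentiableAt_grad), dvg_smul ha1 hb.differentiableAt_grad,
    dvg_smul hb1 ha.differentiableAt_grad, dvg_grad, dvg_grad, dotProduct_comm (grad b x)]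
  ring

theorem dvg_mul_self_smul_grad {s φ : V3 → 𝕜} (hs : ContDiffAt ℝ 2 s x) (hφ : ContDiffAt ℝ 2 φ x) :
    dvg (fun y => (s y * s y) • grad φ y) x
      = s x * lapS (fun y => s y * φ y) x - s x * φ x * lapS s x := by
  have hs1 := hs.differentiableAt two_ne_zero
  rw [dvg_smul (hs1.fun_mul hs1) hφ.differentiableAt_grad, grad_mul hs1 hs1, lapS_mul hs hφ,
    dvg_grad]
  simp only [add_dotProduct, smul_dotProduct, smul_eq_mul]
  ring

def logGrad (f : V3 → 𝕜) (y : V3) : Fin 3 → 𝕜 := fun k => grad f y k / f y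

theorem pd_logGrad {f : V3 → 𝕜} (hf : ContDiffAt ℝ 2 f x) (hf0 : f x ≠ 0) (j k : Fin 3) :
    pd j (fun y => logGrad f y k) x = pd j (pd k f) x / f x - logGrad f x j * logGrad f x k := by
  simp only [logGrad, grad]
  rw [pd_div (hf.differentiableAt_pd k) (hf.differentiableAt two_ne_zero) hf0]
  field_simp

theorem ContDiffAt.differentiableAt_logGrad {f : V3 → 𝕜} (hf : ContDiffAt ℝ 2 f x)
    (hf0 : f x ≠ 0) : DifferentiableAt ℝ (logGrad f) x :=
  differentiableAt_pi.2 fun k => by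
    simpa only [logGrad, grad, div_eq_mul_inv] using
      (hf.differentiableAt_pd k).fun_mul ((hf.differentiableAt two_ne_zero).fun_inv hf0)

theorem dvg_logGrad {f : V3 → 𝕜} (hf : ContDiffAt ℝ 2 f x) (hf0 : f x ≠ 0) :
    dvg (logGrad f) x = lapS f x / f x - logGrad f x ⬝ᵥ logGrad f x := by
  simp only [dvg, lapS, pd_logGrad hf hf0, dotProduct, Fin.sum_univ_three]
  ring

theorem rot_logGrad {f : V3 → 𝕜} (hf : ContDiffAt ℝ 2 f x) (hf0 : f x ≠ 0) :
    rot (logGrad f) x = 0 := by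
  simp [rot, pd_logGrad hf hf0, hf.pd_pd_comm 1 2, hf.pd_pd_comm 2 0, hf.pd_pd_comm 0 1, mul_comm]

end VectorCalculus

section Quaternionic

open Quaternion

theorem vecq_mul_vecq (a b : Fin 3 → ℂ) :
    vecq a * vecq b = scq (-(a ⬝ᵥ b)) + vecq (a ⨯₃ b) := by
  ext <;> simp only [re_mul, imI_mul, imJ_mul, imK_mul, re_add, imI_add, imJ_add, imK_add] <;>
    simp only [vecq, scq, dotProduct, Fin.sum_univ_three, cross_apply, Fin.isValue, cons_val] <;>
    ring

theorem vecq_sub_scq_mul (a b : Fin 3 → ℂ) (s : ℂ) :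
    vecq a - scq s * vecq b = vecq (a - s • b) := by
  ext <;> simp only [re_mul, imI_mul, imJ_mul, imK_mul, re_sub, imI_sub, imJ_sub, imK_sub] <;>
    simp only [vecq, scq, Pi.sub_apply, Pi.smul_apply, smul_eq_mul] <;> ring

theorem smul_scq (c a : ℂ) : c • scq a = scq (c * a) := by
  ext <;> simp only [re_smul, imI_smul, imJ_smul, imK_smul] <;>
    simp only [scq, smul_eq_mul, mul_zero]

theorem Dq_vecq (V : V3 → Fin 3 → ℂ) (x : V3) :
    Dq (fun y => vecq (V y)) x = scq (-dvg V x) + vecq (rot V x) := by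
  ext <;> simp only [Dq, re_mul, imI_mul, imJ_mul, imK_mul, re_add, imI_add, imJ_add, imK_add] <;>
    simp only [vecq, scq, e1, e2, e3, qpd, dvg, rot, pd, Fin.isValue, cons_val, fderiv_fun_const,
      Pi.zero_apply, _root_.zero_apply] <;> ring

theorem Dq_add_mul_logGrad {f g : V3 → ℂ} {x : V3} (hf : ContDiffAt ℝ 2 f x)
    (hg : ContDiffAt ℝ 2 g x) (hf0 : f x ≠ 0) :
    Dq (fun y => vecq (grad g y) - scq (g y) * vecq (logGrad f y)) x
        + (vecq (grad g x) - scq (g x) * vecq (logGrad f x)) * vecq (logGrad f x)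
      = scq (g x * lapS f x / f x - lapS g x) := by
  have hW := hf.differentiableAt_logGrad hf0
  have hg1 := hg.differentiableAt two_ne_zero
  simp only [vecq_sub_scq_mul, Dq_vecq, vecq_mul_vecq]
  rw [dvg_sub hg.differentiableAt_grad (hg1.fun_smul hW), rot_sub hg.differentiableAt_grad
    (hg1.fun_smul hW), dvg_smul hg1 hW, rot_smul hg1 hW, dvg_grad, rot_grad hg,
    dvg_logGrad hf hf0, rot_logGrad hf hf0]
  simp only [LinearMap.map_sub₂, LinearMap.map_smul₂, cross_self, sub_dotProduct, smul_dotProduct,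
    smul_zero, sub_zero, add_zero, zero_sub]
  ext <;> simp only [re_add, imI_add, imJ_add, imK_add] <;>
    simp only [vecq, scq, Pi.neg_apply, smul_eq_mul] <;> ring

end Quaternionic

theorem stmt14_general (Ω : Set V3) (hΩ : IsOpen Ω) (p q u₀ sq : V3 → ℂ)
    (hp0 : ∀ x ∈ Ω, p x ≠ 0)
    (hsq : ContDiffOn ℝ 2 sq Ω) (hsq2 : ∀ x ∈ Ω, sq x ^ 2 = p x)
    (hu : ContDiffOn ℝ 2 u₀ Ω) (hu0 : ∀ x ∈ Ω, u₀ x ≠ 0)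
    (hueq : ∀ x ∈ Ω, dvg (fun y k => p y * pd k u₀ y) x + q x * u₀ x = 0)
    (φ : V3 → ℂ) (hφ : ContDiffOn ℝ 2 φ Ω) :
    ∀ x ∈ Ω,
      scq (dvg (fun y k => p y * pd k φ y) x + q x * φ x)
      = -(sq x) •
        (Dq (fun y => vecq (grad (fun z => sq z * φ z) y)
              - scq (sq y * φ y)
                * vecq fun k => grad (fun z => sq z * u₀ z) y k / (sq y * u₀ y)) x
          + (vecq (grad (fun z => sq z * φ z) x)
              - scq (sq x * φ x)
                * vecq fun k => grad (fun z => sq z * u₀ z) x k / (sq x * u₀ x))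
            * vecq fun k => grad (fun z => sq z * u₀ z) x k / (sq x * u₀ x)) := by
  intro x hx
  have hΩx : Ω ∈ 𝓝 x := hΩ.mem_nhds hx
  have hsx := hsq.contDiffAt hΩx
  have hux := hu.contDiffAt hΩx
  have hφx := hφ.contDiffAt hΩx
  have hsx0 : sq x ≠ 0 := fun h => hp0 x hx (by rw [← hsq2 x hx, h, zero_pow two_ne_zero])
  have hux0 := hu0 x hx
  have hdvg (ψ : V3 → ℂ) :
      dvg (fun y k => p y * pd k ψ y) x = dvg (fun y => (sq y * sq y) • grad ψ y) x :=
    Filter.EventuallyEq.dvg_eq <| eventually_of_mem hΩx fun y hy => by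
      funext k
      simp [grad, ← hsq2 y hy, pow_two]
  have hq : q x * u₀ x = sq x * u₀ x * lapS sq x - sq x * lapS (fun y => sq y * u₀ y) x := by
    have h := hueq x hx
    rw [hdvg, dvg_mul_self_smul_grad hsx hux] at h
    linear_combination h
  have hfactor := Dq_add_mul_logGrad (hsx.mul hux) (hsx.mul hφx) (mul_ne_zero hsx0 hux0)
  unfold logGrad at hfactor
  rw [hfactor, hdvg, dvg_mul_self_smul_grad hsx hφx, smul_scq]
  congr 1
  field_simp
  linear_combination φ x * hq

/-- factorization of div p grad + q:
div(p grad φ) + qφ = -p^{1/2}(D + M^{Df/f})(D - M^{Df/f})(p^{1/2}φ), f = p^{1/2}u₀. -/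
theorem stmt14 (Ω : Set V3) (hΩ : IsOpen Ω) (p q u₀ sq : V3 → ℂ)
    (hp : ContDiffOn ℝ 2 p Ω) (hp0 : ∀ x ∈ Ω, p x ≠ 0)
    (hsq : ContDiffOn ℝ 2 sq Ω) (hsq2 : ∀ x ∈ Ω, sq x ^ 2 = p x)
    (hu : ContDiffOn ℝ 2 u₀ Ω) (hu0 : ∀ x ∈ Ω, u₀ x ≠ 0)
    (hueq : ∀ x ∈ Ω, dvg (fun y k => p y * pd k u₀ y) x + q x * u₀ x = 0)
    (φ : V3 → ℂ) (hφ : ContDiffOn ℝ 2 φ Ω) :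
    ∀ x ∈ Ω,
      scq (dvg (fun y k => p y * pd k φ y) x + q x * φ x)
      = -(sq x) •
        (Dq (fun y => vecq (grad (fun z => sq z * φ z) y)
              - scq (sq y * φ y)
                * vecq fun k => grad (fun z => sq z * u₀ z) y k / (sq y * u₀ y)) x
          + (vecq (grad (fun z => sq z * φ z) x)
              - scq (sq x * φ x)
                * vecq fun k => grad (fun z => sq z * u₀ z) x k / (sq x * u₀ x))
            * vecq fun k => grad (fun z => sq z * u₀ z) x k / (sq x * u₀ x)) :=
  stmt14_general Ω hΩ p q u₀ sq hp0 hsq hsq2 hu hu0 hueq φ hφ
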